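/- arXiv:1507.08464 — 4 statements merged into one kernel-verified Lean document; each statement's English description precedes it below -/
import Mathlib

section
/- (Abstract Babuška–Aziz implies Friedrichs–Velte.) Let X, Y, Z be Hilbert spaces and B : X → Y, R : X → Z bounded linear operators satisfying ‖v‖_X² = ‖Bv‖_Y² + ‖Rv‖_Z² for all v ∈ X. Suppose there is a constant C ≥ 1 such that every q ∈ (ker B*)^⊥ admits v ∈ X with Bv = q and ‖v‖_X² ≤ C‖q‖_Y². Then for all h ∈ Y and g ∈ Z with B*h = R*g and h ∈ (ker B*)^⊥, one has ‖h‖_Y² ≤ (C − 1)·‖g‖_Z². -/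
open scoped RealInnerProductSpace

theorem le_of_sq_le_mul {α : Type*} [Field α] [LinearOrder α] [IsStrictOrderedRing α] {x k : α}
    (hk : 0 ≤ k) (hx : x ^ 2 ≤ k * x) : x ≤ k := by
  nlinarith

theorem ContinuousLinearMap.inner_apply_eq_of_adjoint_eq {𝕜 X Y Z : Type*} [RCLike 𝕜]
    [NormedAddCommGroup X] [InnerProductSpace 𝕜 X] [CompleteSpace X]
    [NormedAddCommGroup Y] [InnerProductSpace 𝕜 Y] [CompleteSpace Y]
    [NormedAddCommGroup Z] [InnerProductSpace 𝕜 Z] [CompleteSpace Z]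
    {B : X →L[𝕜] Y} {R : X →L[𝕜] Z} {h : Y} {g : Z}
    (hconj : B.adjoint h = R.adjoint g) (v : X) : inner 𝕜 h (B v) = inner 𝕜 g (R v) := by
  rw [← B.adjoint_inner_left, hconj, R.adjoint_inner_left]

/-- Abstract Babuška–Aziz implies Friedrichs–Velte: if `‖v‖² = ‖Bv‖² + ‖Rv‖²` and every
`q ∈ (ker B*)ᗮ` has a preimage `v` with `Bv = q`, `‖v‖² ≤ C‖q‖²`, then every conjugate
pair `B*h = R*g` with `h ∈ (ker B*)ᗮ` satisfies `‖h‖² ≤ (C-1)‖g‖²`. -/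
theorem babuska_aziz_implies_friedrichs_velte
    {X Y Z : Type*} [NormedAddCommGroup X] [InnerProductSpace ℝ X] [CompleteSpace X]
    [NormedAddCommGroup Y] [InnerProductSpace ℝ Y] [CompleteSpace Y]
    [NormedAddCommGroup Z] [InnerProductSpace ℝ Z] [CompleteSpace Z]
    (B : X →L[ℝ] Y) (R : X →L[ℝ] Z)
    (hnorm : ∀ v : X, ‖v‖ ^ 2 = ‖B v‖ ^ 2 + ‖R v‖ ^ 2)
    (C : ℝ) (hC : 1 ≤ C)
    (hBA : ∀ q ∈ (LinearMap.ker (ContinuousLinearMap.adjoint B : Y →ₗ[ℝ] X))ᗮ,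
      ∃ v : X, B v = q ∧ ‖v‖ ^ 2 ≤ C * ‖q‖ ^ 2) :
    ∀ (h : Y) (g : Z), h ∈ (LinearMap.ker (ContinuousLinearMap.adjoint B : Y →ₗ[ℝ] X))ᗮ →
      ContinuousLinearMap.adjoint B h = ContinuousLinearMap.adjoint R g →
      ‖h‖ ^ 2 ≤ (C - 1) * ‖g‖ ^ 2 := by
  intro h g hperp hconj
  obtain ⟨v, rfl, hv⟩ := hBA h hperp
  have hRv : ‖R v‖ ^ 2 ≤ (C - 1) * ‖B v‖ ^ 2 := by linarith [hnorm v]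
  have hinner : ‖B v‖ ^ 2 = ⟪g, R v⟫ := by
    rw [← real_inner_self_eq_norm_sq, ContinuousLinearMap.inner_apply_eq_of_adjoint_eq hconj]
  refine le_of_sq_le_mul (mul_nonneg (sub_nonneg.2 hC) (sq_nonneg _)) ?_
  calc (‖B v‖ ^ 2) ^ 2 = ⟪g, R v⟫ ^ 2 := by rw [hinner]
    _ ≤ ‖g‖ ^ 2 * ‖R v‖ ^ 2 := by
      rw [← mul_pow, ← sq_abs]
      exact pow_le_pow_left₀ (abs_nonneg _) (abs_real_inner_le_norm g (R v)) 2
    _ ≤ ‖g‖ ^ 2 * ((C - 1) * ‖B v‖ ^ 2) := by gcongr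
    _ = (C - 1) * ‖g‖ ^ 2 * ‖B v‖ ^ 2 := by ring
end

section
/- (Abstract Friedrichs–Velte implies Babuška–Aziz.) Let X, Y, Z be Hilbert spaces and B : X → Y, R : X → Z bounded linear operators satisfying ‖v‖_X² = ‖Bv‖_Y² + ‖Rv‖_Z² for all v ∈ X. Suppose there is Γ ≥ 0 such that whenever h ∈ (ker B*)^⊥ and g ∈ Z satisfy B*h = R*g, then ‖h‖_Y² ≤ Γ‖g‖_Z². Then the inf-sup condition holds: for every p ∈ (ker B*)^⊥, sup_{v ∈ X, v ≠ 0} ⟨p, Bv⟩/‖v‖_X ≥ (Γ + 1)^{−1/2} ‖p‖_Y. -/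
/-!
Put `u := B† p`; since `‖·‖² = ‖B ·‖² + ‖R ·‖²` polarizes to `B†B + R†R = 1`, this `u` solves the
variational problem, and `h := p - B u`, `g := R u` form a conjugate pair with
`h ∈ (ker B†)ᗮ`. As `⟪B u, h⟫ = ‖R u‖²`, Cauchy–Schwarz and `‖h‖² ≤ Γ‖R u‖²` give
`‖R u‖² ≤ Γ‖B u‖²`, hence `‖p‖² = ‖B u + h‖² ≤ (Γ + 1)‖u‖²`. Finally the supremum of
`⟪p, B v⟫ / ‖v‖ = ⟪B† p, v⟫ / ‖v‖` is exactly `‖B† p‖ = ‖u‖`.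
-/

open scoped RealInnerProductSpace

open ContinuousLinearMap

theorem sSup_inner_div_norm_eq_norm {X : Type*} [NormedAddCommGroup X] [InnerProductSpace ℝ X]
    (u : X) : sSup {r : ℝ | ∃ v : X, v ≠ 0 ∧ r = ⟪u, v⟫ / ‖v‖} = ‖u‖ := by
  rcases eq_or_ne u 0 with rfl | hu
  · rw [norm_zero]
    refine le_antisymm (Real.sSup_nonpos ?_) (Real.sSup_nonneg ?_) <;>
      rintro _ ⟨v, -, rfl⟩ <;> simp
  refine IsGreatest.csSup_eq ⟨⟨u, hu, ?_⟩, ?_⟩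
  · rw [real_inner_self_eq_norm_sq, pow_two, mul_div_cancel_right₀ _ (norm_ne_zero_iff.2 hu)]
  · rintro _ ⟨v, hv, rfl⟩
    exact div_le_of_le_mul₀ (norm_nonneg v) (norm_nonneg u) (real_inner_le_norm u v)

section

variable {X Y Z : Type*} [NormedAddCommGroup X] [InnerProductSpace ℝ X] [CompleteSpace X]
    [NormedAddCommGroup Y] [InnerProductSpace ℝ Y] [CompleteSpace Y]
    [NormedAddCommGroup Z] [InnerProductSpace ℝ Z] [CompleteSpace Z]

theorem map_mem_orthogonal_ker_adjoint (B : X →L[ℝ] Y) (x : X) :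
    B x ∈ (LinearMap.ker (adjoint B : Y →ₗ[ℝ] X))ᗮ :=
  B.orthogonal_range ▸ Submodule.le_orthogonal_orthogonal _ ⟨x, rfl⟩

theorem adjoint_map_add_adjoint_map_of_norm_sq_eq {B : X →L[ℝ] Y} {R : X →L[ℝ] Z}
    (hnorm : ∀ v : X, ‖v‖ ^ 2 = ‖B v‖ ^ 2 + ‖R v‖ ^ 2) (u : X) :
    adjoint B (B u) + adjoint R (R u) = u := by
  refine ext_inner_right ℝ fun v ↦ ?_
  have := hnorm (u + v)
  rw [inner_add_left, adjoint_inner_left, adjoint_inner_left, map_add, map_add] at *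
  rw [norm_add_sq_real, norm_add_sq_real, norm_add_sq_real] at this
  linarith [hnorm u, hnorm v]

theorem adjoint_sub_map_adjoint_eq {B : X →L[ℝ] Y} {R : X →L[ℝ] Z}
    (hnorm : ∀ v : X, ‖v‖ ^ 2 = ‖B v‖ ^ 2 + ‖R v‖ ^ 2) (p : Y) :
    adjoint B (p - B (adjoint B p)) = adjoint R (R (adjoint B p)) := by
  rw [map_sub, sub_eq_iff_eq_add', adjoint_map_add_adjoint_map_of_norm_sq_eq hnorm]

theorem norm_map_add_sq_le_of_conjugate {B : X →L[ℝ] Y} {R : X →L[ℝ] Z}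
    (hnorm : ∀ v : X, ‖v‖ ^ 2 = ‖B v‖ ^ 2 + ‖R v‖ ^ 2) {Γ : ℝ} (hΓ : 0 ≤ Γ) {u : X} {h : Y}
    (hconj : adjoint B h = adjoint R (R u)) (hh : ‖h‖ ^ 2 ≤ Γ * ‖R u‖ ^ 2) :
    ‖B u + h‖ ^ 2 ≤ (Γ + 1) * ‖u‖ ^ 2 := by
  have hcross : ⟪B u, h⟫ = ‖R u‖ ^ 2 := by
    rw [← adjoint_inner_right, hconj, adjoint_inner_right, real_inner_self_eq_norm_sq]
  have hCS : ‖R u‖ ^ 2 ≤ ‖B u‖ * ‖h‖ := hcross ▸ real_inner_le_norm _ _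
  have hRB : ‖R u‖ ^ 2 ≤ Γ * ‖B u‖ ^ 2 := by
    have hsq : ‖R u‖ ^ 2 * ‖R u‖ ^ 2 ≤ ‖R u‖ ^ 2 * (Γ * ‖B u‖ ^ 2) :=
      calc ‖R u‖ ^ 2 * ‖R u‖ ^ 2 ≤ ‖B u‖ ^ 2 * ‖h‖ ^ 2 := by
            nlinarith [mul_self_le_mul_self (sq_nonneg ‖R u‖) hCS]
        _ ≤ ‖B u‖ ^ 2 * (Γ * ‖R u‖ ^ 2) := by gcongr
        _ = ‖R u‖ ^ 2 * (Γ * ‖B u‖ ^ 2) := by ring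
    rcases (sq_nonneg ‖R u‖).eq_or_lt with hR | hR
    · rw [← hR]; positivity
    · exact le_of_mul_le_mul_left hsq hR
  rw [norm_add_sq_real, hcross, hnorm u]
  nlinarith

end

/-- Abstract Friedrichs–Velte implies Babuška–Aziz (inf-sup form): if `‖v‖² = ‖Bv‖² + ‖Rv‖²`
and every conjugate pair `(h, g)` with `h ∈ (ker B*)ᗮ` satisfies `‖h‖² ≤ Γ‖g‖²`, then
for every `p ∈ (ker B*)ᗮ`, `sup_{v ≠ 0} ⟪p, Bv⟫/‖v‖ ≥ (Γ+1)^{-1/2} ‖p‖`. -/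
theorem friedrichs_velte_implies_inf_sup
    {X Y Z : Type*} [NormedAddCommGroup X] [InnerProductSpace ℝ X] [CompleteSpace X]
    [NormedAddCommGroup Y] [InnerProductSpace ℝ Y] [CompleteSpace Y]
    [NormedAddCommGroup Z] [InnerProductSpace ℝ Z] [CompleteSpace Z]
    (B : X →L[ℝ] Y) (R : X →L[ℝ] Z)
    (hnorm : ∀ v : X, ‖v‖ ^ 2 = ‖B v‖ ^ 2 + ‖R v‖ ^ 2)
    (Γ : ℝ) (hΓ : 0 ≤ Γ)
    (hFV : ∀ (h : Y) (g : Z), h ∈ (LinearMap.ker (ContinuousLinearMap.adjoint B : Y →ₗ[ℝ] X))ᗮ →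
      ContinuousLinearMap.adjoint B h = ContinuousLinearMap.adjoint R g →
      ‖h‖ ^ 2 ≤ Γ * ‖g‖ ^ 2) :
    ∀ p ∈ (LinearMap.ker (ContinuousLinearMap.adjoint B : Y →ₗ[ℝ] X))ᗮ,
      sSup {r : ℝ | ∃ v : X, v ≠ 0 ∧ r = ⟪p, B v⟫ / ‖v‖} ≥ ‖p‖ / Real.sqrt (Γ + 1) := by
  intro p hp
  set u := adjoint B p
  have hbound : ‖p‖ ^ 2 ≤ (Γ + 1) * ‖u‖ ^ 2 := by
    have hmem := Submodule.sub_mem _ hp (map_mem_orthogonal_ker_adjoint B u)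
    have hconj := adjoint_sub_map_adjoint_eq hnorm p
    simpa using norm_map_add_sq_le_of_conjugate hnorm hΓ hconj (hFV _ _ hmem hconj)
  have hsup : sSup {r : ℝ | ∃ v : X, v ≠ 0 ∧ r = ⟪p, B v⟫ / ‖v‖} = ‖u‖ := by
    simp_rw [← adjoint_inner_left]
    exact sSup_inner_div_norm_eq_norm u
  rw [hsup, ge_iff_le, div_le_iff₀ (by positivity), ← pow_le_pow_iff_left₀ (norm_nonneg p)
    (by positivity) two_ne_zero, mul_pow, Real.sq_sqrt (by linarith)]
  linarith
end

section
/- (Equality of optimal constants, abstract form.) Let X, Y, Z be Hilbert spaces and B : X → Y, R : X → Z bounded operators with ‖v‖_X² = ‖Bv‖_Y² + ‖Rv‖_Z² for all v ∈ X. Define C as the smallest constant such that every q ∈ (ker B*)^⊥ has a preimage v with Bv = q, ‖v‖_X² ≤ C‖q‖_Y², and define Γ as the smallest constant such that ‖h‖_Y² ≤ Γ‖g‖_Z² for all conjugate pairs (B*h = R*g) with h ∈ (ker B*)^⊥ (both constants possibly infinite). Then C is finite if and only if Γ is finite, and in that case C = Γ + 1. -/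
open scoped RealInnerProductSpace

/-!
Since `‖v‖² = ‖Bv‖² + ‖Rv‖²` means `B†B + R†R = 1`, a preimage `v` of `h` with
`‖v‖² ≤ C‖h‖²` has `‖Rv‖² ≤ (C - 1)‖h‖²`, and for a conjugate pair
`‖h‖² = ⟪B†h, v⟫ = ⟪g, Rv⟫ ≤ ‖g‖ ‖Rv‖`; hence `Γ ≤ C - 1`.
Conversely, for `h ∈ (ker B†)ᗮ` the pair `(h - BB†h, RB†h)` is conjugate, and the
Friedrichs–Velte bound for it becomes the coercivity estimate `‖h‖² ≤ (Γ + 1)‖B†h‖²`.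
Lax–Milgram on `(ker B†)ᗮ` then solves `BB†h = q`, and `v = B†h` shows `C ≤ Γ + 1`.
-/

open ContinuousLinearMap

section HilbertAdjoint

variable {E F : Type*} [NormedAddCommGroup E] [InnerProductSpace ℝ E] [CompleteSpace E]
  [NormedAddCommGroup F] [InnerProductSpace ℝ F] [CompleteSpace F]

theorem adjoint_apply_mem_orthogonal_ker (T : E →L[ℝ] F) (v : F) :
    adjoint T v ∈ (LinearMap.ker (T : E →ₗ[ℝ] F))ᗮ := by
  intro u hu
  rw [adjoint_inner_right, show T u = 0 from hu, inner_zero_left]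

theorem exists_adjoint_apply_eq_of_norm_sq_le (T : E →L[ℝ] F) {c : ℝ} (hc : 0 < c)
    (hT : ∀ h ∈ (LinearMap.ker (T : E →ₗ[ℝ] F))ᗮ, ‖h‖ ^ 2 ≤ c * ‖T h‖ ^ 2)
    {q : E} (hq : q ∈ (LinearMap.ker (T : E →ₗ[ℝ] F))ᗮ) :
    ∃ v : F, adjoint T v = q ∧ ‖v‖ ^ 2 ≤ c * ‖q‖ ^ 2 := by
  set K := (LinearMap.ker (T : E →ₗ[ℝ] F))ᗮ
  -- Lax–Milgram for the form `⟪T u, T w⟫` on `K`: the preimage is `T h` with `T†T h = q`.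
  set L := T ∘L K.subtypeL
  have hL : ∀ u w : K, innerSL ℝ (adjoint L (L u)) w = ⟪T u, T w⟫ := fun u w =>
    adjoint_inner_left L w (L u)
  have hcoercive : IsCoercive (innerSL ℝ ∘L adjoint L ∘L L) := by
    refine ⟨c⁻¹, inv_pos.2 hc, fun u => ?_⟩
    rw [comp_apply, comp_apply, hL, real_inner_self_eq_norm_sq, mul_assoc, ← sq,
      inv_mul_le_iff₀ hc]
    exact hT u u.2
  obtain ⟨h, hh⟩ := hcoercive.continuousLinearEquivOfBilin.surjective ⟨q, hq⟩
  have hweak : ∀ w ∈ K, ⟪q, w⟫ = ⟪T h, T w⟫ := fun w hw => by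
    simpa [hh, hL] using hcoercive.continuousLinearEquivOfBilin_apply h ⟨w, hw⟩
  refine ⟨T h, ?_, ?_⟩
  · have hmem : adjoint T (T h) - q ∈ K := K.sub_mem (adjoint_apply_mem_orthogonal_ker T _) hq
    have hzero : ⟪adjoint T (T h) - q, adjoint T (T h) - q⟫ = 0 := by
      rw [inner_sub_left, adjoint_inner_left, ← hweak _ hmem, sub_self]
    exact sub_eq_zero.1 (inner_self_eq_zero.1 hzero)
  · have hTh : ‖T h‖ ^ 2 = ⟪q, h⟫ := by rw [hweak h h.2, real_inner_self_eq_norm_sq]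
    have hcs : ⟪q, h⟫ ≤ ‖q‖ * ‖(h : E)‖ := real_inner_le_norm _ _
    have hlower : ‖(h : E)‖ ^ 2 ≤ c * ⟪q, h⟫ := hTh ▸ hT h h.2
    have hbound : ‖(h : E)‖ ≤ c * ‖q‖ := by
      nlinarith [mul_le_mul_of_nonneg_left hcs hc.le, mul_nonneg hc.le (norm_nonneg q)]
    nlinarith [norm_nonneg q]

end HilbertAdjoint

section OptimalConstants

variable {X Y Z : Type*} [NormedAddCommGroup X] [InnerProductSpace ℝ X] [CompleteSpace X]
  [NormedAddCommGroup Y] [InnerProductSpace ℝ Y] [CompleteSpace Y]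
  [NormedAddCommGroup Z] [InnerProductSpace ℝ Z] [CompleteSpace Z]

def babuskaAzizBounds (B : X →L[ℝ] Y) : Set ℝ :=
  {C : ℝ | ∀ q ∈ (LinearMap.ker (adjoint B : Y →ₗ[ℝ] X))ᗮ,
    ∃ v : X, B v = q ∧ ‖v‖ ^ 2 ≤ C * ‖q‖ ^ 2}

def friedrichsVelteBounds (B : X →L[ℝ] Y) (R : X →L[ℝ] Z) : Set ℝ :=
  {Γ : ℝ | ∀ (h : Y) (g : Z), h ∈ (LinearMap.ker (adjoint B : Y →ₗ[ℝ] X))ᗮ →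
    adjoint B h = adjoint R g → ‖h‖ ^ 2 ≤ Γ * ‖g‖ ^ 2}

theorem mem_babuskaAzizBounds_of_le {B : X →L[ℝ] Y} {C C' : ℝ} (hC : C ∈ babuskaAzizBounds B)
    (hle : C ≤ C') : C' ∈ babuskaAzizBounds B := fun q hq =>
  let ⟨v, hv, hbound⟩ := hC q hq
  ⟨v, hv, hbound.trans (mul_le_mul_of_nonneg_right hle (sq_nonneg _))⟩

theorem mem_friedrichsVelteBounds_of_le {B : X →L[ℝ] Y} {R : X →L[ℝ] Z} {Γ Γ' : ℝ}
    (hΓ : Γ ∈ friedrichsVelteBounds B R) (hle : Γ ≤ Γ') : Γ' ∈ friedrichsVelteBounds B R :=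
  fun h g hh hconj => (hΓ h g hh hconj).trans (mul_le_mul_of_nonneg_right hle (sq_nonneg _))

variable {B : X →L[ℝ] Y} {R : X →L[ℝ] Z}

theorem adjoint_apply_add_adjoint_apply_eq_self (hnorm : ∀ v : X, ‖v‖ ^ 2 = ‖B v‖ ^ 2 + ‖R v‖ ^ 2) (v : X) :
    adjoint B (B v) + adjoint R (R v) = v := by
  refine ext_inner_right ℝ fun w => ?_
  have hsum := hnorm (v + w)
  rw [map_add, map_add, norm_add_sq_real, norm_add_sq_real, norm_add_sq_real, hnorm v,
    hnorm w] at hsum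
  rw [inner_add_left, adjoint_inner_left, adjoint_inner_left]
  linarith

theorem babuskaAzizBounds_eq_univ_of_lt_one (hB : ∀ v : X, ‖B v‖ ≤ ‖v‖)
    {C : ℝ} (hC : C ∈ babuskaAzizBounds B) (hC1 : C < 1) : babuskaAzizBounds B = Set.univ := by
  refine Set.eq_univ_of_forall fun C' q hq => ⟨0, ?_⟩
  obtain ⟨v, rfl, hbound⟩ := hC q hq
  have hBv : ‖B v‖ ^ 2 ≤ ‖v‖ ^ 2 := by gcongr; exact hB v
  have hBv0 : ‖B v‖ ^ 2 = 0 := by nlinarith [sq_nonneg ‖B v‖]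
  simp_all

theorem friedrichsVelteBounds_eq_univ_of_neg {Γ : ℝ} (hΓ : Γ ∈ friedrichsVelteBounds B R)
    (hΓ0 : Γ < 0) : friedrichsVelteBounds B R = Set.univ := by
  refine Set.eq_univ_of_forall fun Γ' h g hh hconj => ?_
  have hbound := hΓ h g hh hconj
  have hg : ‖g‖ ^ 2 = 0 := by nlinarith [sq_nonneg ‖h‖, sq_nonneg ‖g‖]
  rw [hg, mul_zero] at hbound ⊢
  exact hbound

theorem sub_one_mem_friedrichsVelteBounds (hnorm : ∀ v : X, ‖v‖ ^ 2 = ‖B v‖ ^ 2 + ‖R v‖ ^ 2)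
    {C : ℝ} (hC : C ∈ babuskaAzizBounds B) (hC1 : 1 ≤ C) :
    C - 1 ∈ friedrichsVelteBounds B R := by
  intro h g hh hconj
  obtain ⟨v, rfl, hbound⟩ := hC h hh
  have hpair : ‖B v‖ ^ 2 = ⟪g, R v⟫ := by
    rw [← real_inner_self_eq_norm_sq, ← adjoint_inner_left, hconj, adjoint_inner_left]
  have hRv : ‖R v‖ ^ 2 ≤ (C - 1) * ‖B v‖ ^ 2 := by linarith [hnorm v]
  have hsq : (‖B v‖ ^ 2) ^ 2 ≤ (C - 1) * ‖g‖ ^ 2 * ‖B v‖ ^ 2 :=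
    calc (‖B v‖ ^ 2) ^ 2 ≤ (‖g‖ * ‖R v‖) ^ 2 := by
          gcongr; exact hpair ▸ real_inner_le_norm _ _
      _ = ‖g‖ ^ 2 * ‖R v‖ ^ 2 := by ring
      _ ≤ ‖g‖ ^ 2 * ((C - 1) * ‖B v‖ ^ 2) := by gcongr
      _ = (C - 1) * ‖g‖ ^ 2 * ‖B v‖ ^ 2 := by ring
  nlinarith [mul_nonneg (sub_nonneg.2 hC1) (sq_nonneg ‖g‖)]

theorem norm_sq_le_add_one_mul_norm_adjoint_sq
    (hnorm : ∀ v : X, ‖v‖ ^ 2 = ‖B v‖ ^ 2 + ‖R v‖ ^ 2) {Γ : ℝ}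
    (hΓ : Γ ∈ friedrichsVelteBounds B R) (hΓ0 : 0 ≤ Γ) {h : Y}
    (hh : h ∈ (LinearMap.ker (adjoint B : Y →ₗ[ℝ] X))ᗮ) :
    ‖h‖ ^ 2 ≤ (Γ + 1) * ‖adjoint B h‖ ^ 2 := by
  set u := adjoint B h
  set t := h - B u
  have hconj : adjoint B t = adjoint R (R u) := by
    rw [map_sub]
    exact sub_eq_of_eq_add' (adjoint_apply_add_adjoint_apply_eq_self hnorm u).symm
  have ht : ‖t‖ ^ 2 ≤ Γ * ‖R u‖ ^ 2 := by
    refine hΓ t (R u) (Submodule.sub_mem _ hh ?_) hconj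
    simpa using adjoint_apply_mem_orthogonal_ker (adjoint B) u
  have hdecomp : h = t + B u := (sub_add_cancel h (B u)).symm
  have hht : ⟪h, t⟫ = ‖t‖ ^ 2 + ‖R u‖ ^ 2 := by
    calc ⟪h, t⟫ = ⟪t, t⟫ + ⟪u, adjoint B t⟫ := by
          rw [adjoint_inner_right, ← inner_add_left, ← hdecomp]
      _ = ‖t‖ ^ 2 + ‖R u‖ ^ 2 := by
          rw [hconj, adjoint_inner_right, real_inner_self_eq_norm_sq, real_inner_self_eq_norm_sq]
  have hsplit : ‖h‖ ^ 2 = ⟪h, t⟫ + ‖u‖ ^ 2 := by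
    calc ‖h‖ ^ 2 = ⟪h, t⟫ + ⟪adjoint B h, u⟫ := by
          rw [adjoint_inner_left, ← inner_add_right, ← hdecomp, real_inner_self_eq_norm_sq]
      _ = ⟪h, t⟫ + ‖u‖ ^ 2 := by rw [real_inner_self_eq_norm_sq]
  have hht0 : 0 ≤ ⟪h, t⟫ := hht ▸ by positivity
  have hsq : (Γ + 1) * ⟪h, t⟫ ^ 2 ≤ (Γ * ‖h‖ ^ 2) * ⟪h, t⟫ :=
    calc (Γ + 1) * ⟪h, t⟫ ^ 2 ≤ (Γ + 1) * (‖h‖ * ‖t‖) ^ 2 := by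
          gcongr; exact real_inner_le_norm _ _
      _ = ‖h‖ ^ 2 * ((Γ + 1) * ‖t‖ ^ 2) := by ring
      _ ≤ ‖h‖ ^ 2 * (Γ * ⟪h, t⟫) := by
          refine mul_le_mul_of_nonneg_left ?_ (sq_nonneg _)
          rw [hht]; linarith
      _ = (Γ * ‖h‖ ^ 2) * ⟪h, t⟫ := by ring
  have hkey : (Γ + 1) * ⟪h, t⟫ ≤ Γ * ‖h‖ ^ 2 := by
    nlinarith [mul_nonneg hΓ0 (sq_nonneg ‖h‖)]
  linear_combination hkey + (Γ + 1) * hsplit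

theorem add_one_mem_babuskaAzizBounds (hnorm : ∀ v : X, ‖v‖ ^ 2 = ‖B v‖ ^ 2 + ‖R v‖ ^ 2)
    {Γ : ℝ} (hΓ : Γ ∈ friedrichsVelteBounds B R) (hΓ0 : 0 ≤ Γ) :
    Γ + 1 ∈ babuskaAzizBounds B := fun _ hq => by
  simpa using exists_adjoint_apply_eq_of_norm_sq_le (adjoint B) (by linarith)
    (fun _ hh => norm_sq_le_add_one_mul_norm_adjoint_sq hnorm hΓ hΓ0 hh) hq

end OptimalConstants

/-- Equality of optimal constants, abstract form: with `‖v‖² = ‖Bv‖² + ‖Rv‖²`, the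
Babuška–Aziz constant (the smallest `C` such that every `q ∈ (ker B*)ᗮ` has a preimage
`v` with `Bv = q`, `‖v‖² ≤ C‖q‖²`) is finite if and only if the Friedrichs–Velte constant
(the smallest `Γ` with `‖h‖² ≤ Γ‖g‖²` for all conjugate pairs with `h ∈ (ker B*)ᗮ`)
is finite, and in that case `C = Γ + 1`. -/
theorem optimal_constants_equality
    {X Y Z : Type*} [NormedAddCommGroup X] [InnerProductSpace ℝ X] [CompleteSpace X]
    [NormedAddCommGroup Y] [InnerProductSpace ℝ Y] [CompleteSpace Y]
    [NormedAddCommGroup Z] [InnerProductSpace ℝ Z] [CompleteSpace Z]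
    (B : X →L[ℝ] Y) (R : X →L[ℝ] Z)
    (hnorm : ∀ v : X, ‖v‖ ^ 2 = ‖B v‖ ^ 2 + ‖R v‖ ^ 2) :
    ({C : ℝ | ∀ q ∈ (LinearMap.ker (ContinuousLinearMap.adjoint B : Y →ₗ[ℝ] X))ᗮ,
        ∃ v : X, B v = q ∧ ‖v‖ ^ 2 ≤ C * ‖q‖ ^ 2}.Nonempty ↔
      {Γ : ℝ | ∀ (h : Y) (g : Z),
        h ∈ (LinearMap.ker (ContinuousLinearMap.adjoint B : Y →ₗ[ℝ] X))ᗮ →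
        ContinuousLinearMap.adjoint B h = ContinuousLinearMap.adjoint R g →
        ‖h‖ ^ 2 ≤ Γ * ‖g‖ ^ 2}.Nonempty) ∧
    (∀ C Γ : ℝ,
      IsLeast {C : ℝ | ∀ q ∈ (LinearMap.ker (ContinuousLinearMap.adjoint B : Y →ₗ[ℝ] X))ᗮ,
        ∃ v : X, B v = q ∧ ‖v‖ ^ 2 ≤ C * ‖q‖ ^ 2} C →
      IsLeast {Γ : ℝ | ∀ (h : Y) (g : Z),
        h ∈ (LinearMap.ker (ContinuousLinearMap.adjoint B : Y →ₗ[ℝ] X))ᗮ →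
        ContinuousLinearMap.adjoint B h = ContinuousLinearMap.adjoint R g →
        ‖h‖ ^ 2 ≤ Γ * ‖g‖ ^ 2} Γ →
      C = Γ + 1) := by
  show ((babuskaAzizBounds B).Nonempty ↔ (friedrichsVelteBounds B R).Nonempty) ∧
    ∀ C Γ : ℝ, IsLeast (babuskaAzizBounds B) C → IsLeast (friedrichsVelteBounds B R) Γ →
      C = Γ + 1
  have hB : ∀ v : X, ‖B v‖ ≤ ‖v‖ := fun v =>
    (pow_le_pow_iff_left₀ (norm_nonneg _) (norm_nonneg _) two_ne_zero).1
      (by linarith [hnorm v, sq_nonneg ‖R v‖])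
  refine ⟨⟨fun ⟨C, hC⟩ => ⟨max C 1 - 1, ?_⟩, fun ⟨Γ, hΓ⟩ => ⟨max Γ 0 + 1, ?_⟩⟩, fun C Γ hC hΓ => ?_⟩
  · exact sub_one_mem_friedrichsVelteBounds hnorm
      (mem_babuskaAzizBounds_of_le hC (le_max_left C 1)) (le_max_right C 1)
  · exact add_one_mem_babuskaAzizBounds hnorm
      (mem_friedrichsVelteBounds_of_le hΓ (le_max_left Γ 0)) (le_max_right Γ 0)
  have hC1 : 1 ≤ C := not_lt.1 fun hC1 => not_bddBelow_univ <|
    babuskaAzizBounds_eq_univ_of_lt_one hB hC.1 hC1 ▸ hC.bddBelow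
  have hΓ0 : 0 ≤ Γ := not_lt.1 fun hΓ0 => not_bddBelow_univ <|
    friedrichsVelteBounds_eq_univ_of_neg hΓ.1 hΓ0 ▸ hΓ.bddBelow
  linarith [hC.2 (add_one_mem_babuskaAzizBounds hnorm hΓ.1 hΓ0),
    hΓ.2 (sub_one_mem_friedrichsVelteBounds hnorm hC.1 hC1)]
end

section
/- (Cauchy–Schwarz step in part (i) of the equivalence proof.) Let X, Y, Z be Hilbert spaces with bounded B : X → Y, R : X → Z satisfying ‖v‖_X² = ‖Bv‖_Y² + ‖Rv‖_Z². Suppose h ∈ Y, g ∈ Z satisfy B*h = R*g, and u ∈ X satisfies Bu = h with ‖u‖_X² ≤ C‖h‖_Y². Then ‖h‖_Y² = ⟨g, Ru⟩_Z and consequently ‖h‖_Y² ≤ (C − 1)‖g‖_Z². -/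
open scoped RealInnerProductSpace

theorem ContinuousLinearMap.inner_apply_eq_of_adjoint_eq_s11 {𝕜 E F G : Type*} [RCLike 𝕜]
    [NormedAddCommGroup E] [InnerProductSpace 𝕜 E] [CompleteSpace E]
    [NormedAddCommGroup F] [InnerProductSpace 𝕜 F] [CompleteSpace F]
    [NormedAddCommGroup G] [InnerProductSpace 𝕜 G] [CompleteSpace G]
    {A : E →L[𝕜] F} {S : E →L[𝕜] G} {y : F} {z : G} (h : adjoint A y = adjoint S z) (x : E) :
    inner 𝕜 y (A x) = inner 𝕜 z (S x) := by
  rw [← adjoint_inner_left, h, adjoint_inner_left]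

/-- Cauchy–Schwarz gives `⟪g, w⟫² ≤ ‖g‖² ‖w‖² ≤ K ‖g‖² ⟪g, w⟫`; divide by `⟪g, w⟫` when it is positive. -/
theorem real_inner_le_mul_norm_sq_of_norm_sq_le {E : Type*} [NormedAddCommGroup E]
    [InnerProductSpace ℝ E] {K : ℝ} (hK : 0 ≤ K) {g w : E} (hw : ‖w‖ ^ 2 ≤ K * ⟪g, w⟫) :
    ⟪g, w⟫ ≤ K * ‖g‖ ^ 2 := by
  rcases le_or_gt ⟪g, w⟫ 0 with hneg | hpos
  · exact hneg.trans (by positivity)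
  have hcs : ⟪g, w⟫ ^ 2 ≤ ‖g‖ ^ 2 * ‖w‖ ^ 2 := by
    rw [← mul_pow]
    exact pow_le_pow_left₀ hpos.le (real_inner_le_norm g w) 2
  have hsq : ⟪g, w⟫ * ⟪g, w⟫ ≤ (K * ‖g‖ ^ 2) * ⟪g, w⟫ := by
    nlinarith [mul_le_mul_of_nonneg_left hw (sq_nonneg ‖g‖)]
  exact le_of_mul_le_mul_right hsq hpos

/-- Cauchy–Schwarz step in part (i) of the equivalence proof: if `B*h = R*g`, `Bu = h`
and `‖u‖² ≤ C‖h‖²`, then `‖h‖² = ⟪g, Ru⟫` and consequently `‖h‖² ≤ (C-1)‖g‖²`. -/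
theorem cauchy_schwarz_step
    {X Y Z : Type*} [NormedAddCommGroup X] [InnerProductSpace ℝ X] [CompleteSpace X]
    [NormedAddCommGroup Y] [InnerProductSpace ℝ Y] [CompleteSpace Y]
    [NormedAddCommGroup Z] [InnerProductSpace ℝ Z] [CompleteSpace Z]
    (B : X →L[ℝ] Y) (R : X →L[ℝ] Z)
    (hnorm : ∀ v : X, ‖v‖ ^ 2 = ‖B v‖ ^ 2 + ‖R v‖ ^ 2)
    (C : ℝ) (hC : 1 ≤ C) (h : Y) (g : Z) (u : X)
    (hconj : ContinuousLinearMap.adjoint B h = ContinuousLinearMap.adjoint R g)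
    (hu : B u = h) (hbound : ‖u‖ ^ 2 ≤ C * ‖h‖ ^ 2) :
    ‖h‖ ^ 2 = ⟪g, R u⟫ ∧ ‖h‖ ^ 2 ≤ (C - 1) * ‖g‖ ^ 2 := by
  have hinner : ‖h‖ ^ 2 = ⟪g, R u⟫ := by
    rw [← real_inner_self_eq_norm_sq,
      ← ContinuousLinearMap.inner_apply_eq_of_adjoint_eq_s11 hconj, hu]
  have hRu_le : ‖R u‖ ^ 2 ≤ (C - 1) * ⟪g, R u⟫ := by
    rw [← hinner]
    have hsplit := hnorm u
    rw [hu] at hsplit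
    linarith
  exact ⟨hinner, hinner ▸ real_inner_le_mul_norm_sq_of_norm_sq_le (by linarith) hRu_le⟩
end
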